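/- Let p ≥ 3 and n ≥ 1 be integers, A > 0, and let γ : {1,…,n} × {1,…,n} → ℝ be symmetric with |γ(k,k')| ≤ 1 for all k, k' and Σ_{k'=1}^n |γ(k,k')| ≤ A for every k. Let (η_{uv})_{1≤u<v≤p} be nonnegative integers such that the graph on vertices {1,…,p} with an edge between u and v whenever η_{uv} ≥ 1 is connected. Then there is a constant C, depending only on p and A (not on n or γ), such that Σ_{k₁,…,k_p=1}^n Π_{1≤u<v≤p} |γ(k_u, k_v)|^{η_{uv}} ≤ C · n^{⌊(p−1)/2⌋}. -/

import Mathlib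

open MeasureTheory Real Filter Topology

noncomputable section

/-- The unit sphere `S²` in `ℝ³`. -/
abbrev S2 : Type := Metric.sphere (0 : EuclideanSpace ℝ (Fin 3)) 1

/-- The scalar product `⟨x,y⟩` of two points of the sphere. -/
def sinner (x y : S2) : ℝ :=
  inner ℝ (x : EuclideanSpace ℝ (Fin 3)) (y : EuclideanSpace ℝ (Fin 3))

/-- The geodesic distance `d(x,y) = arccos⟨x,y⟩` on the sphere. -/
def gdist (x y : S2) : ℝ := Real.arccos (sinner x y)

/-- The map of the sphere induced by a linear isometry (rotation) of `ℝ³`. -/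
def rotMap (ρ : EuclideanSpace ℝ (Fin 3) ≃ₗᵢ[ℝ] EuclideanSpace ℝ (Fin 3)) (x : S2) : S2 :=
  ⟨ρ x, by
    have hx : ‖(x : EuclideanSpace ℝ (Fin 3))‖ = 1 := mem_sphere_zero_iff_norm.mp x.2
    rw [mem_sphere_zero_iff_norm, ρ.norm_map]
    exact hx⟩

/-- `σ` is the rotation-invariant surface measure on `S²` with total mass `4π`. -/
def IsSurfaceMeasure (σ : Measure S2) : Prop :=
  σ Set.univ = ENNReal.ofReal (4 * Real.pi) ∧
    ∀ ρ : EuclideanSpace ℝ (Fin 3) ≃ₗᵢ[ℝ] EuclideanSpace ℝ (Fin 3),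
      Measure.map (rotMap ρ) σ = σ

/-- The Legendre polynomial `P_l`, via Rodrigues' formula (normalized by `P_l(1) = 1`). -/
def legendreP (l : ℕ) (t : ℝ) : ℝ :=
  ((2 : ℝ) ^ l * Nat.factorial l)⁻¹ *
    Polynomial.eval t
      ((fun p => Polynomial.derivative p)^[l] ((Polynomial.X ^ 2 - 1) ^ l : Polynomial ℝ))

/-- The normalized Legendre kernel `L_l(t) = ((2l+1)/(4π)) P_l(t)`. -/
def Lk (l : ℕ) (t : ℝ) : ℝ := ((2 * (l : ℝ) + 1) / (4 * Real.pi)) * legendreP l t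

/-- The hypotheses on the Littlewood–Paley window function `φ`:
`φ` is `C^∞`, even, nonincreasing on `[0,∞)`, `0 ≤ φ ≤ 1`, `φ = 1` on `[-1/B, 1/B]`
and `φ = 0` outside `(-1, 1)`. -/
structure IsLPWindow (B : ℝ) (φ : ℝ → ℝ) : Prop where
  smooth : ContDiff ℝ (⊤ : ℕ∞) φ
  even : ∀ ξ, φ (-ξ) = φ ξ
  anti : AntitoneOn φ (Set.Ici 0)
  nonneg : ∀ ξ, 0 ≤ φ ξ
  le_one : ∀ ξ, φ ξ ≤ 1
  eq_one : ∀ ξ, |ξ| ≤ 1 / B → φ ξ = 1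
  eq_zero : ∀ ξ, 1 ≤ |ξ| → φ ξ = 0

/-- `b²(ξ) = φ(ξ/B) - φ(ξ)`. -/
def b2 (φ : ℝ → ℝ) (B ξ : ℝ) : ℝ := φ (ξ / B) - φ ξ

/-- `b(ξ) = √(b²(ξ))`. -/
def bfun (φ : ℝ → ℝ) (B ξ : ℝ) : ℝ := Real.sqrt (b2 φ B ξ)

/-- The kernel `Λ_j(x,y) = Σ_l b²(l/B^j) L_l(⟨x,y⟩)`. -/
def LamK (φ : ℝ → ℝ) (B : ℝ) (j : ℕ) (x y : S2) : ℝ :=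
  ∑' l : ℕ, b2 φ B ((l : ℝ) / B ^ j) * Lk l (sinner x y)

/-- The kernel `M_j(x,y) = Σ_l b(l/B^j) L_l(⟨x,y⟩)`. -/
def MK (φ : ℝ → ℝ) (B : ℝ) (j : ℕ) (x y : S2) : ℝ :=
  ∑' l : ℕ, bfun φ B ((l : ℝ) / B ^ j) * Lk l (sinner x y)

/-- The operator `Λ_j(f)(x) = ∫ Λ_j(x,y) f(y) dσ(y)`. -/
def LamF (φ : ℝ → ℝ) (B : ℝ) (σ : Measure S2) (j : ℕ) (f : S2 → ℝ) (x : S2) : ℝ :=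
  ∫ y, LamK φ B j x y * f y ∂σ

/-- `L₀(f)(x) = ∫ L₀(⟨x,y⟩) f(y) dσ(y)`. -/
def L0F (σ : Measure S2) (f : S2 → ℝ) (x : S2) : ℝ :=
  ∫ y, Lk 0 (sinner x y) * f y ∂σ

/-- Cubature points and positive weights, exact for polynomials of degree at most `D`. -/
def IsCubature (σ : Measure S2) (D : ℕ) {ι : Type} [Fintype ι] (ξ : ι → S2) (lam : ι → ℝ) : Prop :=
  (∀ k, 0 < lam k) ∧
  ∀ Ppoly : MvPolynomial (Fin 3) ℝ, Ppoly.totalDegree ≤ D →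
    ∫ x, MvPolynomial.eval (fun i => (x : EuclideanSpace ℝ (Fin 3)) i) Ppoly ∂σ =
      ∑ k, lam k * MvPolynomial.eval (fun i => ((ξ k : S2) : EuclideanSpace ℝ (Fin 3)) i) Ppoly

section Fields

variable {Omg : Type}

/-- `T` is a centered (jointly) Gaussian random field on the sphere: every finite linear
combination of its values is a centered Gaussian random variable. -/
def IsCenteredGaussianField [MeasurableSpace Omg] (P : Measure Omg) (T : S2 → Omg → ℝ) : Prop :=
  (∀ x, Measurable (T x)) ∧
  ∀ (n : ℕ) (x : Fin n → S2) (c : Fin n → ℝ), ∃ v : NNReal,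
    Measure.map (fun ω => ∑ i, c i * T (x i) ω) P = ProbabilityTheory.gaussianReal 0 v

/-- Mean-square continuity of a random field. -/
def MeanSquareContinuous [MeasurableSpace Omg] (P : Measure Omg) (T : S2 → Omg → ℝ) : Prop :=
  ∀ x : S2, Tendsto (fun y => ∫ ω, (T y ω - T x ω) ^ 2 ∂P) (𝓝 x) (𝓝 0)

/-- The field `T` is isotropic with angular power spectrum `(C_l)`:
`E[T(x)T(y)] = Σ_l C_l L_l(⟨x,y⟩)`. -/
def HasAngularPowerSpectrum [MeasurableSpace Omg] (P : Measure Omg) (T : S2 → Omg → ℝ)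
    (C : ℕ → ℝ) : Prop :=
  ∀ x y : S2, HasSum (fun l : ℕ => C l * Lk l (sinner x y)) (∫ ω, T x ω * T y ω ∂P)

/-- The projection `T_l(x) = ∫ T(y) L_l(⟨x,y⟩) dσ(y)` onto degree-`l` spherical harmonics. -/
def Tl (σ : Measure S2) (T : S2 → Omg → ℝ) (l : ℕ) (x : S2) (ω : Omg) : ℝ :=
  ∫ y, T y ω * Lk l (sinner x y) ∂σ

/-- The random needlet coefficient `β_{j,k} = √λ_{j,k} Σ_l b(l/B^j) T_l(ξ_{j,k})`. -/
def nCoeff (σ : Measure S2) (T : S2 → Omg → ℝ) (φ : ℝ → ℝ) (B : ℝ) (j : ℕ)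
    (lamk : ℝ) (ξk : S2) (ω : Omg) : ℝ :=
  Real.sqrt lamk * ∑' l : ℕ, bfun φ B ((l : ℝ) / B ^ j) * Tl σ T l ξk ω

/-- The normalized needlet coefficient `β̂_{j,k} = β_{j,k} / √(E β_{j,k}²)`. -/
def nCoeffHat [MeasurableSpace Omg] (P : Measure Omg) (σ : Measure S2)
    (T : S2 → Omg → ℝ) (φ : ℝ → ℝ) (B : ℝ) (j : ℕ) (lamk : ℝ) (ξk : S2) (ω : Omg) : ℝ :=
  nCoeff σ T φ B j lamk ξk ω / Real.sqrt (∫ ω', (nCoeff σ T φ B j lamk ξk ω') ^ 2 ∂P)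

/-- Evaluation of the `q`-th probabilists' Hermite polynomial. -/
def hermiteEval (q : ℕ) (x : ℝ) : ℝ := Polynomial.aeval x (Polynomial.hermite q)

/-- The polynomial needlet statistic
`h_{u,N_j} = N_j⁻¹ Σ_{k=1}^{N_j²} Σ_{q=1}^Q w_q H_q(β̂_{j,k})`. -/
def hstat [MeasurableSpace Omg] (P : Measure Omg) (σ : Measure S2) (T : S2 → Omg → ℝ)
    (φ : ℝ → ℝ) (B : ℝ) (N : ℕ → ℕ) (ξ : ∀ j, Fin (N j ^ 2) → S2)
    (lam : ∀ j, Fin (N j ^ 2) → ℝ) (Q : ℕ) (w : ℕ → ℝ) (j : ℕ) (ω : Omg) : ℝ :=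
  (N j : ℝ)⁻¹ * ∑ k, ∑ q ∈ Finset.Icc 1 Q,
      w q * hermiteEval q (nCoeffHat P σ T φ B j (lam j k) (ξ j k) ω)

/-- The covariance matrix `Ω_j = (E[h_{u,N_j} h_{v,N_j}])_{u,v}`. -/
def covMat [MeasurableSpace Omg] (P : Measure Omg) (σ : Measure S2) (T : S2 → Omg → ℝ)
    (φ : ℝ → ℝ) (B : ℝ) (N : ℕ → ℕ) (ξ : ∀ j, Fin (N j ^ 2) → S2)
    (lam : ∀ j, Fin (N j ^ 2) → ℝ) (U Q : ℕ) (w : Fin U → ℕ → ℝ) (j : ℕ) :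
    Matrix (Fin U) (Fin U) ℝ :=
  Matrix.of fun u v =>
    ∫ ω, hstat P σ T φ B N ξ lam Q (w u) j ω * hstat P σ T φ B N ξ lam Q (w v) j ω ∂P

end Fields

/-- Assumption 2 of the paper: `C_l = l^{-α} g_j(l/B^j)` on `B^{j-1} < l < B^{j+1}`, with
`c₁ l^{-α} ≤ C_l ≤ c₂ l^{-α}` and uniformly bounded derivatives of the `g_j` up to order `M`. -/
def Assumption2 (B : ℝ) (C : ℕ → ℝ) (α : ℝ) (M : ℕ) : Prop :=
  2 < α ∧
  ∃ (g : ℕ → ℝ → ℝ) (c₁ c₂ : ℝ) (kk : ℕ → ℝ), 0 < c₁ ∧ 0 < c₂ ∧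
    (∀ j l : ℕ, B ^ ((j : ℝ) - 1) < l → (l : ℝ) < B ^ ((j : ℝ) + 1) →
      C l = (l : ℝ) ^ (-α) * g j ((l : ℝ) / B ^ j) ∧
        c₁ * (l : ℝ) ^ (-α) ≤ C l ∧ C l ≤ c₂ * (l : ℝ) ^ (-α)) ∧
    (∀ j, ContDiffOn ℝ M (g j) (Set.Icc (1 / B) B)) ∧
    (∀ r, r ≤ M → ∀ j, ∀ u ∈ Set.Icc (1 / B) B,
      |iteratedDerivWithin r (g j) (Set.Icc (1 / B) B) u| ≤ kk r)

end

lemma tree_sum_bound (n : ℕ) (A : ℝ) (hA : 0 ≤ A) (g : Fin n → Fin n → ℝ)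
    (hg0 : ∀ a b, 0 ≤ g a b) (hg1 : ∀ b, ∑ a, g a b ≤ A) :
    ∀ (m : ℕ) (V : Type) (_ : Fintype V) (_ : DecidableEq V), Fintype.card V = m →
      ∀ (r : V) (f : V → V) (d : V → ℕ), (∀ v, v ≠ r → d (f v) < d v) →
      ∑ k : V → Fin n, ∏ v ∈ Finset.univ.erase r, g (k v) (k (f v)) ≤ n * A ^ (m - 1) := by
  intro m
  induction m with
  | zero =>
    intro V _ _ hcard r
    exact absurd (Fintype.card_pos_iff.mpr ⟨r⟩) (by omega)
  | succ m ih =>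
    intro V _ _ hcard r f d hd
    by_cases h2 : m = 0
    · -- card V = 1, so univ = {r}
      have hV : (Finset.univ : Finset V) = {r} := by
        apply Finset.eq_singleton_iff_unique_mem.mpr
        refine ⟨Finset.mem_univ r, fun x _ => ?_⟩
        have := Fintype.card_le_one_iff.mp (by omega : Fintype.card V ≤ 1)
        exact this x r
      have : ∀ k : V → Fin n, ∏ v ∈ Finset.univ.erase r, g (k v) (k (f v)) = 1 := by
        intro k
        rw [hV, Finset.erase_singleton, Finset.prod_empty]
      rw [Finset.sum_congr rfl (fun k _ => this k), Finset.sum_const]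
      simp only [Finset.card_univ, Fintype.card_fun, nsmul_eq_mul, mul_one]
      have h3 : (m + 1 : ℕ) - 1 = 0 := by omega
      rw [h3, pow_zero, mul_one, hcard, h2]
      norm_num
    · -- m + 1 ≥ 2
      have hne : (Finset.univ.erase r : Finset V).Nonempty := by
        rw [← Finset.card_pos, Finset.card_erase_of_mem (Finset.mem_univ r),
          Finset.card_univ, hcard]
        omega
      obtain ⟨vs, hvs, hmax⟩ := Finset.exists_max_image _ d hne
      have hvsr : vs ≠ r := Finset.ne_of_mem_erase hvs
      -- no vertex (≠ r) has f u = vs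
      have hleaf : ∀ u : V, u ≠ r → f u ≠ vs := by
        intro u hu hfu
        have h4 := hd u hu
        rw [hfu] at h4
        rcases eq_or_ne u vs with h | h
        · rw [h] at h4; omega
        · have h3 := hmax u (Finset.mem_erase.mpr ⟨hu, Finset.mem_univ u⟩)
          omega
      have hfvs : f vs ≠ vs := by
        intro h
        have h5 := hd vs hvsr
        rw [h] at h5
        omega
      set V' := {j : V // j ≠ vs} with hV'
      have hcard' : Fintype.card V' = m := by
        simp [hV', Fintype.card_subtype_compl, hcard]
      set r' : V' := ⟨r, Ne.symm hvsr⟩ with hr'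
      set f' : V' → V' := fun v => if h : v.1 = r then r' else ⟨f v.1, hleaf v.1 h⟩ with hf'
      set d' : V' → ℕ := fun v => d v.1 with hd'
      have hd'' : ∀ v : V', v ≠ r' → d' (f' v) < d' v := by
        intro v hv
        have hv1 : v.1 ≠ r := fun h => hv (Subtype.ext h)
        simp only [hf', hd', dif_neg hv1]
        exact hd v.1 hv1
      have IH := ih V' inferInstance inferInstance hcard' r' f' d' hd''
      -- rewrite the sum using funSplitAt
      have key : ∑ k : V → Fin n, ∏ v ∈ Finset.univ.erase r, g (k v) (k (f v))
          = ∑ a : Fin n, ∑ k' : V' → Fin n,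
              g a (k' ⟨f vs, hfvs⟩) *
              ∏ v' ∈ Finset.univ.erase r', g (k' v') (k' (f' v')) := by
        rw [← Equiv.sum_comp (Equiv.funSplitAt vs (Fin n)).symm, Fintype.sum_prod_type]
        congr 1; ext a; congr 1; ext k'
        have happ : ∀ w : V, (Equiv.funSplitAt vs (Fin n)).symm (a, k') w
            = if h : w = vs then a else k' ⟨w, h⟩ := by
          intro w
          simp [Equiv.funSplitAt, Equiv.piSplitAt]
        have hmem : vs ∈ Finset.univ.erase r := hvs
        rw [← Finset.prod_erase_mul _ _ hmem]
        rw [mul_comm]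
        congr 1
        · rw [happ vs, happ (f vs), dif_pos rfl, dif_neg hfvs]
        · refine Finset.prod_bij' (fun v hv => (⟨v, (Finset.mem_erase.mp hv).1⟩ : V'))
            (fun v' _ => v'.1) ?_ ?_ ?_ ?_ ?_
          · intro v hv
            refine Finset.mem_erase.mpr ⟨?_, Finset.mem_univ _⟩
            intro h
            exact (Finset.mem_erase.mp (Finset.mem_erase.mp hv).2).1 (congrArg Subtype.val h)
          · intro v' hv'
            refine Finset.mem_erase.mpr ⟨v'.2, Finset.mem_erase.mpr ⟨?_, Finset.mem_univ _⟩⟩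
            exact fun h => (Finset.mem_erase.mp hv').1 (Subtype.ext h)
          · intro v hv; rfl
          · intro v' hv'; rfl
          · intro v hv
            have hv2 := Finset.mem_erase.mp hv
            have hvvs : v ≠ vs := hv2.1
            have hvr : v ≠ r := (Finset.mem_erase.mp hv2.2).1
            rw [happ v, dif_neg hvvs, happ (f v), dif_neg (hleaf v hvr)]
            rw [show f' ⟨v, hvvs⟩ = (⟨f v, hleaf v hvr⟩ : V') from by
              simp only [hf']; rw [dif_neg hvr]]
      rw [key]
      have hP : ∀ k' : V' → Fin n, 0 ≤ ∏ v' ∈ Finset.univ.erase r', g (k' v') (k' (f' v')) :=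
        fun k' => Finset.prod_nonneg fun v' _ => hg0 _ _
      calc ∑ a : Fin n, ∑ k' : V' → Fin n,
              g a (k' ⟨f vs, hfvs⟩) * ∏ v' ∈ Finset.univ.erase r', g (k' v') (k' (f' v'))
          = ∑ k' : V' → Fin n, (∑ a : Fin n, g a (k' ⟨f vs, hfvs⟩)) *
              ∏ v' ∈ Finset.univ.erase r', g (k' v') (k' (f' v')) := by
            rw [Finset.sum_comm]
            exact Finset.sum_congr rfl fun k' _ => (Finset.sum_mul _ _ _).symm
        _ ≤ ∑ k' : V' → Fin n, A * ∏ v' ∈ Finset.univ.erase r', g (k' v') (k' (f' v')) :=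
            Finset.sum_le_sum fun k' _ => mul_le_mul_of_nonneg_right (hg1 _) (hP k')
        _ = A * ∑ k' : V' → Fin n, ∏ v' ∈ Finset.univ.erase r', g (k' v') (k' (f' v')) :=
            (Finset.mul_sum _ _ _).symm
        _ ≤ A * (n * A ^ (m - 1)) := mul_le_mul_of_nonneg_left IH hA
        _ = n * A ^ (m + 1 - 1) := by
            rw [Nat.add_sub_cancel, mul_comm A, mul_assoc, ← pow_succ]
            congr 2
            omega

/-- the diagram-type bound: for a connected multigraph `(η_{uv})` on `p ≥ 3`
nodes and a symmetric kernel `γ` with `|γ| ≤ 1` and row sums bounded by `A`,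
`Σ_{k₁,…,k_p} Π_{u<v} |γ(k_u,k_v)|^{η_{uv}} ≤ C n^{⌊(p−1)/2⌋}` with `C = C(p,A)`. -/
theorem statement9 (p : ℕ) (hp : 3 ≤ p) (A : ℝ) (hA : 0 < A) :
    ∃ C : ℝ, ∀ n : ℕ, 1 ≤ n → ∀ (γ : Fin n → Fin n → ℝ) (η : Fin p → Fin p → ℕ),
      (∀ k k', γ k k' = γ k' k) →
      (∀ k k', |γ k k'| ≤ 1) →
      (∀ k, ∑ k' : Fin n, |γ k k'| ≤ A) →
      (SimpleGraph.fromRel fun u v => u < v ∧ 1 ≤ η u v).Connected →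
      ∑ k : Fin p → Fin n, ∏ e ∈ Finset.univ.filter (fun e : Fin p × Fin p => e.1 < e.2),
          |γ (k e.1) (k e.2)| ^ η e.1 e.2 ≤ C * (n : ℝ) ^ ((p - 1) / 2) := by
  refine ⟨A ^ (p - 1), ?_⟩
  intro n hn γ η hsym hγ1 hsum hG
  set G := SimpleGraph.fromRel fun u v : Fin p => u < v ∧ 1 ≤ η u v with hGdef
  have hr0 : 0 < p := by omega
  set r : Fin p := ⟨0, hr0⟩ with hr
  -- parent function
  have hex : ∀ v : Fin p, v ≠ r → ∃ u, G.Adj v u ∧ G.dist u r < G.dist v r := by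
    intro v hv
    have hpos : 0 < G.dist v r := hG.pos_dist_of_ne hv
    obtain ⟨w, hw⟩ := hG.exists_walk_length_eq_dist v r
    have hnil : ¬w.Nil := by
      rw [SimpleGraph.Walk.not_nil_iff_lt_length, hw]; exact hpos
    refine ⟨w.getVert 1, SimpleGraph.Walk.adj_snd hnil, ?_⟩
    have h1 : G.dist (w.getVert 1) r ≤ w.tail.length := SimpleGraph.dist_le _
    have h2 : w.tail.length + 1 = w.length := SimpleGraph.Walk.length_tail_add_one hnil
    omega
  classical
  set f : Fin p → Fin p := fun v => if h : v = r then r else (hex v h).choose with hf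
  have hfadj : ∀ v : Fin p, v ≠ r → G.Adj v (f v) := by
    intro v hv; rw [hf]; simp only [dif_neg hv]; exact (hex v hv).choose_spec.1
  have hfd : ∀ v : Fin p, v ≠ r → G.dist (f v) r < G.dist v r := by
    intro v hv; rw [hf]; simp only [dif_neg hv]; exact (hex v hv).choose_spec.2
  have hfne : ∀ v : Fin p, v ≠ r → f v ≠ v := by
    intro v hv h; have := hfd v hv; rw [h] at this; omega
  set pair : Fin p → Fin p × Fin p := fun v => if f v < v then (f v, v) else (v, f v) with hpair
  set E : Finset (Fin p × Fin p) :=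
    Finset.univ.filter (fun e : Fin p × Fin p => e.1 < e.2) with hE
  set S : Finset (Fin p × Fin p) := (Finset.univ.erase r).image pair with hS
  have hpair_lt : ∀ v : Fin p, v ≠ r → (pair v).1 < (pair v).2 := by
    intro v hv
    rw [hpair]
    by_cases h : f v < v
    · simp [h]
    · simp only [if_neg h]
      exact lt_of_le_of_ne (not_lt.mp h) (Ne.symm (hfne v hv))
  have hSE : S ⊆ E := by
    intro e he
    rw [hS] at he
    obtain ⟨v, hv, rfl⟩ := Finset.mem_image.mp he
    rw [hE, Finset.mem_filter]
    exact ⟨Finset.mem_univ _, hpair_lt v (Finset.ne_of_mem_erase hv)⟩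
  have hadj_pair : ∀ v : Fin p, v ≠ r → 1 ≤ η (pair v).1 (pair v).2 := by
    intro v hv
    have hadj : G.Adj (pair v).1 (pair v).2 := by
      rw [hpair]
      by_cases h : f v < v
      · simp only [if_pos h]; exact (hfadj v hv).symm
      · simp only [if_neg h]; exact hfadj v hv
    rw [hGdef, SimpleGraph.fromRel_adj] at hadj
    rcases hadj.2 with h | h
    · exact h.2
    · exact absurd h.1 (not_lt.mpr (le_of_lt (hpair_lt v hv)))
  have hinj : ∀ v₁ ∈ Finset.univ.erase r, ∀ v₂ ∈ Finset.univ.erase r,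
      pair v₁ = pair v₂ → v₁ = v₂ := by
    intro v₁ hv₁ v₂ hv₂ heq
    have h₁ := Finset.ne_of_mem_erase hv₁
    have h₂ := Finset.ne_of_mem_erase hv₂
    rw [hpair] at heq
    by_cases c₁ : f v₁ < v₁ <;> by_cases c₂ : f v₂ < v₂ <;>
      simp only [if_pos, if_neg, c₁, c₂, Prod.mk.injEq, if_true, if_false] at heq
    · exact heq.2
    · exfalso
      have d₁ := hfd v₁ h₁
      have d₂ := hfd v₂ h₂
      rw [heq.1] at d₁; rw [← heq.2] at d₂
      omega
    · exfalso
      have d₁ := hfd v₁ h₁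
      have d₂ := hfd v₂ h₂
      rw [heq.2] at d₁; rw [← heq.1] at d₂
      omega
    · exact heq.1
  -- per-k bound
  have hperk : ∀ k : Fin p → Fin n,
      ∏ e ∈ E, |γ (k e.1) (k e.2)| ^ η e.1 e.2 ≤
        ∏ v ∈ Finset.univ.erase r, |γ (k v) (k (f v))| := by
    intro k
    have step1 : ∏ e ∈ E, |γ (k e.1) (k e.2)| ^ η e.1 e.2 ≤
        ∏ e ∈ S, |γ (k e.1) (k e.2)| ^ η e.1 e.2 := by
      rw [← Finset.prod_sdiff hSE]
      have hle1 : ∏ e ∈ E \ S, |γ (k e.1) (k e.2)| ^ η e.1 e.2 ≤ 1 :=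
        Finset.prod_le_one (fun e _ => pow_nonneg (abs_nonneg _) _)
          (fun e _ => pow_le_one₀ (abs_nonneg _) (hγ1 _ _))
      have hge0 : 0 ≤ ∏ e ∈ S, |γ (k e.1) (k e.2)| ^ η e.1 e.2 :=
        Finset.prod_nonneg fun e _ => pow_nonneg (abs_nonneg _) _
      nlinarith
    have step2 : ∏ e ∈ S, |γ (k e.1) (k e.2)| ^ η e.1 e.2 ≤
        ∏ e ∈ S, |γ (k e.1) (k e.2)| := by
      apply Finset.prod_le_prod (fun e _ => pow_nonneg (abs_nonneg _) _)
      intro e he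
      rw [hS] at he
      obtain ⟨v, hv, rfl⟩ := Finset.mem_image.mp he
      have h1 : 1 ≤ η (pair v).1 (pair v).2 := hadj_pair v (Finset.ne_of_mem_erase hv)
      calc |γ (k (pair v).1) (k (pair v).2)| ^ η (pair v).1 (pair v).2
          ≤ |γ (k (pair v).1) (k (pair v).2)| ^ 1 :=
            pow_le_pow_of_le_one (abs_nonneg _) (hγ1 _ _) h1
        _ = _ := pow_one _
    have step3 : ∏ e ∈ S, |γ (k e.1) (k e.2)| =
        ∏ v ∈ Finset.univ.erase r, |γ (k v) (k (f v))| := by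
      rw [hS, Finset.prod_image hinj]
      apply Finset.prod_congr rfl
      intro v hv
      rw [hpair]
      by_cases h : f v < v
      · simp only [if_pos h]; rw [hsym]
      · simp only [if_neg h]
    calc ∏ e ∈ E, |γ (k e.1) (k e.2)| ^ η e.1 e.2 ≤ _ := step1
      _ ≤ _ := step2
      _ = _ := step3
  have hbound : ∑ k : Fin p → Fin n, ∏ v ∈ Finset.univ.erase r, |γ (k v) (k (f v))| ≤
      n * A ^ (p - 1) := by
    apply tree_sum_bound n A hA.le (fun a b => |γ a b|) (fun a b => abs_nonneg _)
      (fun b => by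
        calc ∑ a : Fin n, |γ a b| = ∑ a : Fin n, |γ b a| := by
              apply Finset.sum_congr rfl; intro a _; rw [hsym]
          _ ≤ A := hsum b)
      p (Fin p) inferInstance inferInstance (Fintype.card_fin p) r f
      (fun v => G.dist v r) hfd
  have hfinal : ∑ k : Fin p → Fin n, ∏ e ∈ E, |γ (k e.1) (k e.2)| ^ η e.1 e.2 ≤
      n * A ^ (p - 1) :=
    le_trans (Finset.sum_le_sum fun k _ => hperk k) hbound
  refine le_trans hfinal ?_
  rw [mul_comm]
  apply mul_le_mul_of_nonneg_left _ (pow_nonneg hA.le _)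
  calc (n : ℝ) = (n : ℝ) ^ 1 := (pow_one _).symm
    _ ≤ (n : ℝ) ^ ((p - 1) / 2) := by
        apply pow_le_pow_right₀ (by exact_mod_cast hn)
        omega
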